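/- Let d ≥ 1, let O ⊆ ℝ^d be open, D ⊆ ∂O, N = ∂O \ D. Let (Q_j)_j be a countable, pairwise disjoint family of open axis-parallel cubes in ℝ^d with ⋃_j cl(Q_j) = ℝ^d \ cl(N) and diam(Q_j) ≤ dist(Q_j, N) ≤ 4 diam(Q_j) for every j. Set Σ = {Q_j : cl(Q_j) ∩ cl(O) ≠ ∅} and 𝑶 = O ∪ ⋃_{Q ∈ Σ} (Q \ D). Then for every x ∈ O and every y ∈ 𝑶 \ O one has |x − y| ≥ (1/2) dist(x, D). -/

import Mathlib

open MeasureTheory Metric ENNReal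

/-- An open axis-parallel cube in `ℝ^d`. -/
def IsOpenCube (d : ℕ) (Q : Set (EuclideanSpace ℝ (Fin d))) : Prop :=
  ∃ (a : EuclideanSpace ℝ (Fin d)) (ℓ : ℝ), 0 < ℓ ∧
    Q = {x : EuclideanSpace ℝ (Fin d) | ∀ i, x i ∈ Set.Ioo (a i) (a i + ℓ)}

/-- The (extended) distance `dist(A,B) = inf {edist y z : y ∈ A, z ∈ B}` between two
sets; it equals `∞` if either set is empty. -/
noncomputable def setEDist (d : ℕ) (A B : Set (EuclideanSpace ℝ (Fin d))) : ℝ≥0∞ :=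
  ⨅ x ∈ A, EMetric.infEdist x B

/-!
Let `y ∈ Q_j \ D` lie outside `O`. Since `y ∉ cl N` and `y ∉ D`, `y ∉ cl O`, so the
segment `[x, y]` meets `∂O` at some `z`. If `z ∈ D` we are done. Otherwise `z ∈ N`, and the
Whitney condition gives `diam Q_j ≤ dist(y, N) ≤ |y - z| ≤ |x - y|`. As `cl Q_j` meets `cl O`,
a segment inside the convex set `cl Q_j` from `cl O` to `y` meets `∂O` at a point `z'`, which
lies in `D` because `cl Q_j` avoids `cl N`. Hence `dist(x, D) ≤ |x - y| + |y - z'| ≤ 2 |x - y|`.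
-/

theorem IsPreconnected.inter_frontier_nonempty {X : Type*} [TopologicalSpace X] {s t : Set X}
    (hs : IsPreconnected s) (hst : (s ∩ t).Nonempty) (hst' : (s \ t).Nonempty) :
    (s ∩ frontier t).Nonempty := by
  rw [frontier_eq_closure_inter_closure]
  exact isPreconnected_closed_iff.1 hs _ _ isClosed_closure isClosed_closure
    (fun p _ => (em (p ∈ t)).imp (fun hp => subset_closure hp) (fun hp => subset_closure hp))
    (hst.mono (Set.inter_subset_inter_right _ subset_closure))
    (hst'.mono (Set.inter_subset_inter_right _ subset_closure))

theorem exists_mem_segment_mem_frontier {E : Type*} [AddCommGroup E] [Module ℝ E]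
    [TopologicalSpace E] [IsTopologicalAddGroup E] [ContinuousSMul ℝ E] {s : Set E} {w y : E}
    (hw : w ∈ closure s) (hy : y ∉ closure s) :
    ∃ z ∈ segment ℝ w y, z ∈ frontier s := by
  obtain ⟨z, hz, hzs⟩ := (convex_segment w y).isPreconnected.inter_frontier_nonempty
    ⟨w, left_mem_segment ℝ w y, hw⟩ ⟨y, right_mem_segment ℝ w y, hy⟩
  exact ⟨z, hz, frontier_closure_subset hzs⟩

theorem Convex.exists_mem_frontier_edist_le_ediam {E : Type*} [NormedAddCommGroup E]
    [NormedSpace ℝ E] {C s : Set E} (hC : Convex ℝ C) (hCs : (closure C ∩ closure s).Nonempty)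
    {y : E} (hyC : y ∈ C) (hys : y ∉ closure s) :
    ∃ z ∈ closure C ∩ frontier s, edist y z ≤ Metric.ediam C := by
  obtain ⟨w, hwC, hws⟩ := hCs
  obtain ⟨z, hz, hzs⟩ := exists_mem_segment_mem_frontier hws hys
  have hzC : z ∈ closure C := hC.closure.segment_subset hwC (subset_closure hyC) hz
  refine ⟨z, ⟨hzC, hzs⟩, ?_⟩
  rw [← Metric.ediam_closure]
  exact Metric.edist_le_ediam_of_mem (subset_closure hyC) hzC

theorem IsOpenCube.convex {d : ℕ} {Q : Set (EuclideanSpace ℝ (Fin d))}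
    (hQ : IsOpenCube d Q) : Convex ℝ Q := by
  obtain ⟨a, ℓ, -, rfl⟩ := hQ
  intro p hp q hq s t hs ht hst i
  simpa only [PiLp.add_apply, PiLp.smul_apply, smul_eq_mul] using
    convex_Ioo (a i) (a i + ℓ) (hp i) (hq i) hs ht hst

theorem setEDist_le_infEDist {d : ℕ} {A B : Set (EuclideanSpace ℝ (Fin d))}
    {y : EuclideanSpace ℝ (Fin d)} (hy : y ∈ A) : setEDist d A B ≤ Metric.infEDist y B :=
  iInf₂_le y hy

theorem dist_to_added_points_general (d : ℕ)
    (O D N : Set (EuclideanSpace ℝ (Fin d))) (hO : IsOpen O) (hD : D ⊆ frontier O)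
    (hN : N = frontier O \ D)
    (ι : Type) (Q : ι → Set (EuclideanSpace ℝ (Fin d)))
    (hcube : ∀ j, IsOpenCube d (Q j))
    (hcover : (⋃ j, closure (Q j)) = (closure N)ᶜ)
    (hwhitney : ∀ j, EMetric.diam (Q j) ≤ setEDist d (Q j) N ∧
      setEDist d (Q j) N ≤ 4 * EMetric.diam (Q j)) :
    ∀ x ∈ O,
      ∀ y ∈ (O ∪ ⋃ j ∈ {j | (closure (Q j) ∩ closure O).Nonempty}, (Q j \ D)) \ O,
        (1 / 2) * Metric.infDist x D ≤ dist x y := by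
  rintro x hx y ⟨hyO | hy, hyO'⟩
  · exact absurd hyO hyO'
  simp only [Set.mem_iUnion, Set.mem_ofPred_eq] at hy
  obtain ⟨j, hjO, hyQ, hyD⟩ := hy
  have hQN : closure (Q j) ⊆ (closure N)ᶜ := hcover ▸ Set.subset_iUnion (closure ∘ Q) j
  have hfr : frontier O ⊆ D ∪ N := by rw [hN, Set.union_sdiff_cancel hD]
  have hy_closure : y ∉ closure O := fun h =>
    (hfr ⟨h, hO.interior_eq.symm ▸ hyO'⟩).elim hyD
      fun hyN => hQN (subset_closure hyQ) (subset_closure hyN)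
  obtain ⟨z, hzxy, hzO⟩ := exists_mem_segment_mem_frontier (subset_closure hx) hy_closure
  have hxz := dist_add_dist_of_mem_segment hzxy
  rcases hfr hzO with hzD | hzN
  · linarith [Metric.infDist_le_dist_of_mem hzD (x := x), Metric.infDist_nonneg (x := x) (s := D),
      dist_nonneg (x := z) (y := y)]
  obtain ⟨z', ⟨hz'Q, hz'O⟩, hyz'⟩ :=
    (hcube j).convex.exists_mem_frontier_edist_le_ediam hjO hyQ hy_closure
  have hz'D : z' ∈ D := (hfr hz'O).resolve_right fun h => hQN hz'Q (subset_closure h)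
  have hyz'_le_hyz : edist y z' ≤ edist y z :=
    calc edist y z' ≤ Metric.ediam (Q j) := hyz'
      _ ≤ setEDist d (Q j) N := (hwhitney j).1
      _ ≤ Metric.infEDist y N := setEDist_le_infEDist hyQ
      _ ≤ edist y z := Metric.infEDist_le_edist_of_mem hzN
  rw [edist_dist, edist_dist, ENNReal.ofReal_le_ofReal_iff dist_nonneg] at hyz'_le_hyz
  linarith [Metric.infDist_le_dist_of_mem hz'D (x := x), dist_triangle x y z', dist_comm y z,
    dist_nonneg (x := x) (y := z)]

/-- In the fattening construction, points added to `O` stay far from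
`O` relative to the distance to `D`: for `x ∈ O` and `y ∈ 𝑶 \ O` one has
`|x − y| ≥ (1/2) dist(x,D)`. -/
theorem dist_to_added_points (d : ℕ) (hd : 1 ≤ d)
    (O D N : Set (EuclideanSpace ℝ (Fin d))) (hO : IsOpen O) (hD : D ⊆ frontier O)
    (hN : N = frontier O \ D)
    (ι : Type) [Countable ι] (Q : ι → Set (EuclideanSpace ℝ (Fin d)))
    (hcube : ∀ j, IsOpenCube d (Q j))
    (hdisj : Pairwise (Function.onFun Disjoint Q))
    (hcover : (⋃ j, closure (Q j)) = (closure N)ᶜ)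
    (hwhitney : ∀ j, EMetric.diam (Q j) ≤ setEDist d (Q j) N ∧
      setEDist d (Q j) N ≤ 4 * EMetric.diam (Q j)) :
    ∀ x ∈ O,
      ∀ y ∈ (O ∪ ⋃ j ∈ {j | (closure (Q j) ∩ closure O).Nonempty}, (Q j \ D)) \ O,
        (1 / 2) * Metric.infDist x D ≤ dist x y :=
  dist_to_added_points_general d O D N hO hD hN ι Q hcube hcover hwhitney
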